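/- Let A be an irreducible 0-1 countable matrix. If λ > exp h_Gur(Σ), then the vector v defined by v_k = Σ_{n=0}^∞ p_{ka}^{(n)} λ^{−n} (for a fixed vertex a) is a well-defined finite λ-subeigenvector of A which is deficient only in the coordinate a, satisfying λ^{−1}(Av)_k = v_k − δ_{ka}. -/

import Mathlib

open Filter
open scoped ENNReal NNReal

/-- `w : Fin (n+1) → S` is a path in the graph of the relation `R`. -/
def IsPath {S : Type*} (R : S → S → Prop) {n : ℕ} (w : Fin (n + 1) → S) : Prop :=
  ∀ i : Fin n, R (w i.castSucc) (w i.succ)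

/-- The number `p_{ka}^{(n)}` of paths of length `n` from `k` to `a`, as an `ℝ≥0∞`. -/
noncomputable def pathCount {S : Type*} (R : S → S → Prop) (n : ℕ) (k a : S) : ℝ≥0∞ :=
  ({w : Fin (n + 1) → S | w 0 = k ∧ w (Fin.last n) = a ∧ IsPath R w}.encard : ℝ≥0∞)

/-
Splitting off the first edge of a path gives `p_{ka}^{(n+1)} = ∑_j A_{kj} p_{ja}^{(n)}`, which for
the generating function `v_k = ∑ p_{ka}^{(n)} λ^{-n}` becomes `v_k = δ_{ka} + λ⁻¹ (Av)_k`; all the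
remaining content is the finiteness of `v`. Pick `exp h_Gur < c < λ`, so that eventually
`p_{aa}^{(n)} ≤ c^n`. Prepending a path of length `m` from `k` to `l` gives
`p_{lb}^{(n)} ≤ p_{kb}^{(m+n)}`, hence `λ^{-m} v_l ≤ v_k`. Using a closed path at `a` whose
length `N` is large, `λ^{-N} v_a` is bounded by the tail of the geometric series `∑ (c/λ)^n`,
and irreducibility carries finiteness from `a` to every vertex.
-/

lemma eventually_le_pow_of_limsup_log_div_lt {u : ℕ → ℝ≥0∞} {c : ℝ≥0∞}
    (h : limsup (fun n : ℕ => ENNReal.log (u n) / (n : EReal)) atTop < ENNReal.log c) :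
    ∀ᶠ n in atTop, u n ≤ c ^ n := by
  filter_upwards [eventually_lt_of_limsup_lt h, eventually_gt_atTop 0] with n hn hn0
  have hnpos : (0 : EReal) < n := by exact_mod_cast hn0
  rw [← ENNReal.log_le_log_iff, ENNReal.log_pow,
    ← EReal.div_le_iff_le_mul hnpos (EReal.natCast_ne_top n)]
  exact hn.le

section Paths

open scoped Classical

variable {S : Type*} (R : S → S → Prop)

def pathSet (n : ℕ) (k b : S) : Set (Fin (n + 1) → S) :=
  {w | w 0 = k ∧ w (Fin.last n) = b ∧ IsPath R w}

lemma pathCount_eq_encard (n : ℕ) (k b : S) :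
    pathCount R n k b = (pathSet R n k b).encard := rfl

lemma isPath_cons {n : ℕ} (j : S) (u : Fin (n + 1) → S) :
    IsPath R (Fin.cons j u : Fin (n + 2) → S) ↔ R j (u 0) ∧ IsPath R u := by
  simp [IsPath, Fin.forall_fin_succ]

lemma pathSet_succ (n : ℕ) (k b : S) :
    pathSet R (n + 1) k b = Fin.cons k '' ⋃ j ∈ {j | R k j}, pathSet R n j b := by
  ext w
  constructor
  · rintro ⟨rfl, hb, hw⟩
    rw [← Fin.cons_self_tail w, isPath_cons] at hw
    exact ⟨Fin.tail w, Set.mem_biUnion hw.1 ⟨rfl, hb, hw.2⟩, Fin.cons_self_tail w⟩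
  · rintro ⟨u, hu, rfl⟩
    obtain ⟨j, hkj, rfl, hb, hu⟩ := Set.mem_iUnion₂.1 hu
    exact ⟨rfl, by simpa [← Fin.succ_last] using hb, (isPath_cons R _ u).2 ⟨hkj, hu⟩⟩

lemma pathCount_zero (k b : S) : pathCount R 0 k b = if k = b then 1 else 0 := by
  split_ifs with h
  · subst h
    have hset : pathSet R 0 k k = {fun _ => k} := by
      ext w
      simp [pathSet, IsPath, funext_iff, Fin.forall_fin_one]
    simp [pathCount_eq_encard, hset]
  · have hset : pathSet R 0 k b = ∅ :=
      Set.eq_empty_of_forall_notMem fun w hw => h (hw.1.symm.trans hw.2.1)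
    simp [pathCount_eq_encard, hset]

lemma pathCount_succ (n : ℕ) (k b : S) :
    pathCount R (n + 1) k b = ∑' j, (if R k j then 1 else 0) * pathCount R n j b := by
  have hdisj : Set.PairwiseDisjoint {j | R k j} (pathSet R n · b) := fun j _ j' _ hne =>
    Set.disjoint_left.2 fun u hu hu' => hne (hu.1.symm.trans hu'.1)
  rw [pathCount_eq_encard, pathSet_succ,
    (Fin.cons_right_injective (α := fun _ => S) k).encard_image, ← ENNReal.tsum_set_one,
    ENNReal.tsum_biUnion' (f := fun _ => 1) hdisj]
  simp only [ENNReal.tsum_set_one, ← pathCount_eq_encard]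
  rw [tsum_subtype {j | R k j} (fun j => pathCount R n j b)]
  simp [Set.indicator_apply]

variable {R} in
lemma IsPath.pathCount_ne_zero {m : ℕ} {w : Fin (m + 1) → S} (hw : IsPath R w) :
    pathCount R m (w 0) (w (Fin.last m)) ≠ 0 := by
  simpa [pathCount_eq_encard, ← Set.nonempty_iff_ne_empty] using ⟨w, rfl, rfl, hw⟩

lemma pathCount_le_pathCount_add {m : ℕ} {k l : S} (h : pathCount R m k l ≠ 0) (n : ℕ) (b : S) :
    pathCount R n l b ≤ pathCount R (m + n) k b := by
  induction m generalizing k with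
  | zero =>
    rw [pathCount_zero] at h
    obtain rfl : k = l := by by_contra hkl; simp [hkl] at h
    rw [zero_add]
  | succ m ih =>
    rw [pathCount_succ] at h
    obtain ⟨j, hj⟩ := not_forall.1 (mt ENNReal.tsum_eq_zero.2 h)
    obtain ⟨hA, hjl⟩ := mul_ne_zero_iff.1 hj
    have hkj : R k j := by simpa using hA
    calc pathCount R n l b ≤ pathCount R (m + n) j b := ih hjl
      _ ≤ pathCount R (m + n + 1) k b := by
        rw [pathCount_succ]
        exact le_of_eq_of_le (by simp [hkj]) (ENNReal.le_tsum j)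
      _ = pathCount R (m + 1 + n) k b := by rw [Nat.succ_add]

lemma pathCount_mul_ne_zero {m : ℕ} {a : S} (h : pathCount R m a a ≠ 0) (j : ℕ) :
    pathCount R (j * m) a a ≠ 0 := by
  induction j with
  | zero => simp [pathCount_zero]
  | succ j ih =>
    rw [Nat.succ_mul, add_comm]
    exact (pos_iff_ne_zero.2 ih |>.trans_le (pathCount_le_pathCount_add R h _ a)).ne'

noncomputable def greenFn (x : ℝ≥0∞) (k b : S) : ℝ≥0∞ :=
  ∑' n, pathCount R n k b * x ^ n

lemma greenFn_eq_ite_add (x : ℝ≥0∞) (k b : S) :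
    greenFn R x k b
      = (if k = b then 1 else 0) + x * ∑' j, (if R k j then 1 else 0) * greenFn R x j b := by
  rw [greenFn, tsum_eq_zero_add' ENNReal.summable]
  simp only [pathCount_zero, pow_zero, mul_one, pathCount_succ, greenFn]
  congr 1
  simp_rw [← ENNReal.tsum_mul_left, ← ENNReal.tsum_mul_right]
  rw [ENNReal.tsum_comm]
  exact tsum_congr fun n => tsum_congr fun j => by ring

lemma pow_mul_greenFn_le {m : ℕ} {k l : S} (h : pathCount R m k l ≠ 0) (x : ℝ≥0∞) (b : S) :
    x ^ m * greenFn R x l b ≤ ∑' n, pathCount R (m + n) k b * x ^ (m + n) := by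
  rw [greenFn, ← ENNReal.tsum_mul_left]
  refine ENNReal.tsum_le_tsum fun n => ?_
  rw [pow_add, mul_left_comm]
  gcongr
  exact pathCount_le_pathCount_add R h n b

lemma greenFn_ne_top_of_pathCount_ne_zero {m : ℕ} {k l : S} (h : pathCount R m k l ≠ 0)
    {x : ℝ≥0∞} (hx : x ≠ 0) {b : S} (hk : greenFn R x k b ≠ ⊤) : greenFn R x l b ≠ ⊤ := by
  refine (ENNReal.lt_top_of_mul_ne_top_right (ne_top_of_le_ne_top hk ?_) (pow_ne_zero m hx)).ne
  exact (pow_mul_greenFn_le R h x b).trans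
    (ENNReal.tsum_comp_le_tsum_of_injective (add_right_injective m) _)

lemma greenFn_self_ne_top {L : ℕ} {a : S} (hloop : pathCount R (L + 1) a a ≠ 0) {c x : ℝ≥0∞}
    (hc : ∀ᶠ n in atTop, pathCount R n a a ≤ c ^ n) (hcx : c * x < 1) (hx : x ≠ 0) :
    greenFn R x a a ≠ ⊤ := by
  obtain ⟨M, hM⟩ := eventually_atTop.1 hc
  -- `p_{aa}^{(n)}` may be infinite for `n < M`; a closed path of length `N ≥ M` skips those terms.
  set N := M * (L + 1)
  have htail : ∑' n, pathCount R (N + n) a a * x ^ (N + n) ≤ ∑' n, (c * x) ^ n := calc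
    _ ≤ ∑' n, (c * x) ^ (N + n) := ENNReal.tsum_le_tsum fun n => by
        rw [mul_pow]
        gcongr
        exact hM _ (le_add_right (Nat.le_mul_of_pos_right M L.succ_pos))
    _ ≤ ∑' n, (c * x) ^ n :=
        ENNReal.tsum_comp_le_tsum_of_injective (add_right_injective N) (fun n => (c * x) ^ n)
  have hgeom : ∑' n, (c * x) ^ n ≠ ⊤ := by
    rw [ENNReal.tsum_geometric]
    exact ENNReal.inv_ne_top.2 (tsub_pos_of_lt hcx).ne'
  have hshift := pow_mul_greenFn_le R (pathCount_mul_ne_zero R hloop M) x a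
  exact (ENNReal.lt_top_of_mul_ne_top_right
    (ne_top_of_le_ne_top hgeom (hshift.trans htail)) (pow_ne_zero N hx)).ne

lemma tsum_ite_mul_greenFn_inv {lam : ℝ≥0∞} (h0 : lam ≠ 0) (htop : lam ≠ ⊤) (k b : S) :
    ∑' j, (if R k j then 1 else 0) * greenFn R lam⁻¹ j b
      = lam * (greenFn R lam⁻¹ k b - if k = b then 1 else 0) := by
  rw [greenFn_eq_ite_add R _ k b, ENNReal.add_sub_cancel_left (by split_ifs <;> simp), ← mul_assoc,
    ENNReal.mul_inv_cancel h0 htop, one_mul]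

end Paths

open scoped Classical in
theorem pruitt_subeigenvector_general {S : Type*}
    (R : S → S → Prop)
    (hirr : ∀ a b : S, ∃ n : ℕ, ∃ w : Fin (n + 2) → S,
      w 0 = a ∧ w (Fin.last (n + 1)) = b ∧ IsPath R w)
    (a : S) (hGur : EReal)
    (hG : hGur = Filter.limsup
      (fun n : ℕ => ENNReal.log (pathCount R n a a) / (n : EReal)) Filter.atTop)
    (lam : ℝ≥0) (hlam : EReal.exp hGur < (lam : ℝ≥0∞))
    (v : S → ℝ≥0∞)
    (hv : v = fun k => ∑' n : ℕ, pathCount R n k a * ((lam : ℝ≥0∞)⁻¹) ^ n) :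
    (∀ k, v k ≠ ⊤) ∧
    (∀ k, (lam : ℝ≥0∞)⁻¹ * ∑' j, (if R k j then (1 : ℝ≥0∞) else 0) * v j =
      v k - (if k = a then 1 else 0)) ∧
    (∀ k, ∑' j, (if R k j then (1 : ℝ≥0∞) else 0) * v j ≤ (lam : ℝ≥0∞) * v k) ∧
    (∀ k, k ≠ a → ∑' j, (if R k j then (1 : ℝ≥0∞) else 0) * v j = (lam : ℝ≥0∞) * v k) ∧
    (∑' j, (if R a j then (1 : ℝ≥0∞) else 0) * v j < (lam : ℝ≥0∞) * v a) := by
  have hlam0 : (lam : ℝ≥0∞) ≠ 0 := (zero_le.trans_lt hlam).ne'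
  have hx0 : (lam : ℝ≥0∞)⁻¹ ≠ 0 := ENNReal.inv_ne_zero.2 ENNReal.coe_ne_top
  obtain ⟨c, hGc, hc⟩ := exists_between hlam
  have hga : greenFn R (lam : ℝ≥0∞)⁻¹ a a ≠ ⊤ := by
    obtain ⟨L, w, hw0, hwL, hw⟩ := hirr a a
    refine greenFn_self_ne_top R (hw0 ▸ hwL ▸ hw.pathCount_ne_zero)
      (eventually_le_pow_of_limsup_log_div_lt (c := c) ?_) ?_ hx0
    · rw [← hG]
      exact EReal.exp_lt_exp_iff.1 (by rwa [ENNReal.exp_log])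
    · exact (ENNReal.div_lt_iff (.inl hlam0) (.inl ENNReal.coe_ne_top)).2 (by rwa [one_mul])
  have hfin : ∀ k, v k ≠ ⊤ := fun k => by
    obtain ⟨m, w, hw0, hwk, hw⟩ := hirr a k
    rw [hv]
    exact greenFn_ne_top_of_pathCount_ne_zero R (hw0 ▸ hwk ▸ hw.pathCount_ne_zero) hx0 hga
  have hAv : ∀ k, ∑' j, (if R k j then (1 : ℝ≥0∞) else 0) * v j
      = lam * (v k - if k = a then 1 else 0) := by
    subst hv
    exact fun k => tsum_ite_mul_greenFn_inv R hlam0 ENNReal.coe_ne_top k a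
  have hva : 1 ≤ v a := by
    rw [hv]
    change 1 ≤ greenFn R _ a a
    rw [greenFn_eq_ite_add, if_pos rfl]
    exact le_self_add
  refine ⟨hfin, fun k => ?_, fun k => ?_, fun k hk => ?_, ?_⟩ <;> rw [hAv]
  · rw [← mul_assoc, ENNReal.inv_mul_cancel hlam0 ENNReal.coe_ne_top, one_mul]
  · exact mul_le_mul_right tsub_le_self _
  · rw [if_neg hk, tsub_zero]
  · rw [if_pos rfl]
    exact ENNReal.mul_lt_mul_right hlam0 ENNReal.coe_ne_top
      (ENNReal.sub_lt_self (hfin a) (one_pos.trans_le hva).ne' one_ne_zero)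

open scoped Classical in
/-- Pruitt's construction: if `λ > exp h_Gur(Σ)`, then `v_k = Σ_n p_{ka}^{(n)} λ^{-n}`
is a well-defined finite `λ`-subeigenvector deficient only in coordinate `a`,
satisfying `λ⁻¹ (Av)_k = v_k − δ_{ka}`. -/
theorem pruitt_subeigenvector {S : Type*} [Countable S]
    (R : S → S → Prop)
    (hirr : ∀ a b : S, ∃ n : ℕ, ∃ w : Fin (n + 2) → S,
      w 0 = a ∧ w (Fin.last (n + 1)) = b ∧ IsPath R w)
    (a : S) (hGur : EReal)
    (hG : hGur = Filter.limsup
      (fun n : ℕ => ENNReal.log (pathCount R n a a) / (n : EReal)) Filter.atTop)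
    (lam : ℝ≥0) (hlam : EReal.exp hGur < (lam : ℝ≥0∞))
    (v : S → ℝ≥0∞)
    (hv : v = fun k => ∑' n : ℕ, pathCount R n k a * ((lam : ℝ≥0∞)⁻¹) ^ n) :
    (∀ k, v k ≠ ⊤) ∧
    (∀ k, (lam : ℝ≥0∞)⁻¹ * ∑' j, (if R k j then (1 : ℝ≥0∞) else 0) * v j =
      v k - (if k = a then 1 else 0)) ∧
    (∀ k, ∑' j, (if R k j then (1 : ℝ≥0∞) else 0) * v j ≤ (lam : ℝ≥0∞) * v k) ∧
    (∀ k, k ≠ a → ∑' j, (if R k j then (1 : ℝ≥0∞) else 0) * v j = (lam : ℝ≥0∞) * v k) ∧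
    (∑' j, (if R a j then (1 : ℝ≥0∞) else 0) * v j < (lam : ℝ≥0∞) * v a) :=
  pruitt_subeigenvector_general R hirr a hGur hG lam hlam v hv
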